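/- arXiv:2511.01011 — 14 statements merged into one kernel-verified Lean document; each statement's English description precedes it below -/
import Mathlib

section
/- Let X be a compact T1 topological space and let 𝒞 be a family of open covers of X such that (i) every open cover of X is refined by some member of 𝒞, and (ii) for every C ∈ 𝒞 there exists D ∈ 𝒞 such that every d ∈ D satisfies d ◁_D c for some c ∈ C (where d ◁_D c means every d' ∈ D meeting d is contained in c). Then X is a regular topological space. -/
/-- Let `X` be compact `T1`, and let `𝒞` be a family of open covers such that every open
cover is refined by a member of `𝒞`, and every `C ∈ 𝒞` is `◁`-refined by some `D ∈ 𝒞`.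
Then `X` is regular. -/
theorem stmt3 {X : Type*} [TopologicalSpace X] [CompactSpace X] [T1Space X]
    (𝒞 : Set (Set (Set X)))
    (hopen : ∀ C ∈ 𝒞, ∀ c ∈ C, IsOpen c)
    (hcov : ∀ C ∈ 𝒞, ⋃₀ C = Set.univ)
    (href : ∀ U : Set (Set X), (∀ u ∈ U, IsOpen u) → ⋃₀ U = Set.univ →
      ∃ C ∈ 𝒞, ∀ c ∈ C, ∃ u ∈ U, c ⊆ u)
    (hstar : ∀ C ∈ 𝒞, ∃ D ∈ 𝒞, ∀ d ∈ D, ∃ c ∈ C,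
      ∀ d' ∈ D, (d' ∩ d).Nonempty → d' ⊆ c) :
    ∀ U : Set X, IsOpen U → ∀ x ∈ U,
      ∃ d : Set X, IsOpen d ∧ x ∈ d ∧ closure d ⊆ U := by
  intro U hU x hx
  -- the open cover {U, {x}ᶜ}
  have hVopen : ∀ u ∈ ({U, {x}ᶜ} : Set (Set X)), IsOpen u := by
    rintro u (rfl | rfl)
    · exact hU
    · exact isOpen_compl_singleton
  have hVcov : ⋃₀ ({U, {x}ᶜ} : Set (Set X)) = Set.univ := by
    ext y
    simp only [Set.sUnion_insert, Set.sUnion_singleton, Set.mem_union, Set.mem_univ, iff_true]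
    by_cases hxy : y = x
    · exact Or.inl (hxy ▸ hx)
    · exact Or.inr hxy
  obtain ⟨C, hC, hCref⟩ := href _ hVopen hVcov
  obtain ⟨D, hD, hstarD⟩ := hstar C hC
  have hxD : x ∈ ⋃₀ D := by rw [hcov D hD]; trivial
  obtain ⟨d, hd, hxd⟩ := hxD
  obtain ⟨c, hc, hcd⟩ := hstarD d hd
  have hxc : x ∈ c := hcd d hd ⟨x, hxd, hxd⟩ hxd
  obtain ⟨u, hu, hcu⟩ := hCref c hc
  have hcU : c ⊆ U := by
    rcases hu with rfl | rfl
    · exact hcu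
    · exact absurd (hcu hxc) (by simp)
  refine ⟨d, hopen D hD d hd, hxd, fun y hy => ?_⟩
  have hyD : y ∈ ⋃₀ D := by rw [hcov D hD]; trivial
  obtain ⟨d', hd', hyd'⟩ := hyD
  have hmeet : (d' ∩ d).Nonempty := by
    rcases (mem_closure_iff.mp hy) d' (hopen D hD d' hd') hyd' with ⟨z, hz⟩
    exact ⟨z, hz⟩
  exact hcU (hcd d' hd' hmeet hyd')
end

section
/- Let X be a compact T1 space and let A and B be minimal finite open covers of X. Then there exists a minimal finite open cover C of X that fragments both A and B, i.e., every element of A is the union of the elements of C contained in it, and likewise for B. -/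
/-- A minimal finite open cover: a finite family of open sets covering `X` such that
no proper subfamily covers `X`. -/
def MinOpenCover {X : Type*} [TopologicalSpace X] (A : Set (Set X)) : Prop :=
  A.Finite ∧ (∀ a ∈ A, IsOpen a) ∧ ⋃₀ A = Set.univ ∧
    ∀ a ∈ A, ⋃₀ (A \ {a}) ≠ Set.univ

/-- `C` fragments `A`: `C` refines `A` and every `a ∈ A` is the union of the
elements of `C` contained in it. -/
def Fragments {X : Type*} (C A : Set (Set X)) : Prop :=
  (∀ c ∈ C, ∃ a ∈ A, c ⊆ a) ∧ ∀ a ∈ A, a = ⋃₀ {c ∈ C | c ⊆ a}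

/-- For any two minimal finite open covers `A`, `B` of a compact `T1` space there is a
minimal finite open cover fragmenting both. -/
theorem stmt4 {X : Type*} [TopologicalSpace X] [CompactSpace X] [T1Space X]
    (A B : Set (Set X)) (hA : MinOpenCover A) (hB : MinOpenCover B) :
    ∃ C : Set (Set X), MinOpenCover C ∧ Fragments C A ∧ Fragments C B := by
  classical
  obtain ⟨hAfin, hAopen, hAcov, _⟩ := hA
  obtain ⟨hBfin, hBopen, hBcov, _⟩ := hB
  rcases isEmpty_or_nonempty X with hX | hX
  · refine ⟨∅, ⟨Set.finite_empty, by simp, ?_, by simp⟩, ⟨by simp, ?_⟩, ⟨by simp, ?_⟩⟩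
    · rw [Set.sUnion_empty]
      exact (Set.univ_eq_empty_iff.mpr hX).symm
    · intro a ha
      simp [Set.eq_empty_of_isEmpty a]
    · intro b hb
      simp [Set.eq_empty_of_isEmpty b]
  · set P : X → Set (Set X) := fun x => {s | s ∈ A ∪ B ∧ x ∈ s} with hP
    have hPsub : ∀ x, P x ⊆ A ∪ B := fun x s hs => hs.1
    have hABfin : (A ∪ B).Finite := hAfin.union hBfin
    have hPfin : ∀ x, (P x).Finite := fun x => hABfin.subset (hPsub x)
    have hxP : ∀ x, x ∈ ⋂₀ P x := fun x s hs => hs.2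
    have hopen : ∀ s ∈ A ∪ B, IsOpen s := fun s hs => hs.elim (hAopen s) (hBopen s)
    have hPopen : ∀ x, IsOpen (⋂₀ P x) :=
      fun x => Set.Finite.isOpen_sInter (hPfin x) (fun s hs => hopen s (hPsub x hs))
    set r : Set (Set X) → X :=
      fun p => if h : ∃ x, P x = p then h.choose else Classical.arbitrary X with hrdef
    have hr : ∀ x, P (r (P x)) = P x := by
      intro x
      have h : ∃ y, P y = P x := ⟨x, rfl⟩
      simpa only [hrdef, dif_pos h] using h.choose_spec
    set W : Set X := r '' (Set.range P) with hW
    have hWfin : W.Finite :=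
      ((hABfin.finite_subsets).subset (Set.range_subset_iff.mpr hPsub)).image r
    have hrW : ∀ w ∈ W, r (P w) = w := by
      rintro w ⟨p, ⟨x, rfl⟩, rfl⟩
      rw [hr x]
    set c : X → Set X := fun x => ⋂₀ P x \ (W \ {x}) with hc
    set C : Set (Set X) := c '' W with hC
    have hcopen : ∀ x, IsOpen (c x) :=
      fun x => (hPopen x).sdiff ((hWfin.subset Set.diff_subset).isClosed)
    have hrPW : ∀ y : X, r (P y) ∈ W := fun y => ⟨P y, ⟨y, rfl⟩, rfl⟩
    have hmemC : ∀ y : X, c (r (P y)) ∈ C := fun y => ⟨r (P y), hrPW y, rfl⟩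
    have hsub : ∀ y : X, c (r (P y)) ⊆ ⋂₀ P y := by
      intro y z hz
      have h1 := hz.1
      rwa [hr y] at h1
    have hymem : ∀ y : X, y ∈ c (r (P y)) := by
      intro y
      constructor
      · rw [hr y]; exact hxP y
      · rintro ⟨hyW, hy2⟩
        exact hy2 (hrW y hyW).symm
    have hcov : ⋃₀ C = Set.univ :=
      Set.eq_univ_of_forall fun y => ⟨c (r (P y)), hmemC y, hymem y⟩
    have hmin : ∀ c₀ ∈ C, ⋃₀ (C \ {c₀}) ≠ Set.univ := by
      rintro c₀ ⟨w, hwW, rfl⟩ hcontra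
      have hw : w ∈ ⋃₀ (C \ {c w}) := hcontra ▸ Set.mem_univ w
      obtain ⟨c', ⟨⟨w', hw'W, rfl⟩, hne⟩, hwc'⟩ := hw
      have heq : w = w' := by
        by_contra hww
        exact hwc'.2 ⟨hwW, hww⟩
      rw [← heq] at hne
      exact hne rfl
    have frag : ∀ S : Set (Set X), S ⊆ A ∪ B → ⋃₀ S = Set.univ → Fragments C S := by
      intro S hSsub hScov
      constructor
      · rintro c₀ ⟨w, hwW, rfl⟩
        have hw : w ∈ ⋃₀ S := hScov ▸ Set.mem_univ w
        obtain ⟨s, hsS, hws⟩ := hw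
        exact ⟨s, hsS, fun z hz => hz.1 s ⟨hSsub hsS, hws⟩⟩
      · intro a ha
        apply le_antisymm
        · intro y hy
          exact ⟨c (r (P y)), ⟨hmemC y, fun z hz => hsub y hz a ⟨hSsub ha, hy⟩⟩, hymem y⟩
        · rintro y ⟨c', ⟨_, hc'a⟩, hyc'⟩
          exact hc'a hyc'
    refine ⟨C, ⟨hWfin.image c, ?_, hcov, hmin⟩,
      frag A (fun s hs => Or.inl hs) hAcov, frag B (fun s hs => Or.inr hs) hBcov⟩
    rintro c₀ ⟨w, _, rfl⟩
    exact hcopen w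
end

section
/- Let 𝒞 be a family of open covers of a compact T1 space X such that every open cover of X is refined by some member of 𝒞. Then ⋃𝒞 (the collection of all sets appearing in some cover in 𝒞) is a basis for the topology of X. -/
/-- If `𝒞` is a family of open covers of a compact `T1` space such that every open cover
is refined by a member of `𝒞`, then `⋃𝒞` is a basis of the topology. -/
theorem stmt5 {X : Type*} [TopologicalSpace X] [CompactSpace X] [T1Space X]
    (𝒞 : Set (Set (Set X)))
    (hopen : ∀ C ∈ 𝒞, ∀ c ∈ C, IsOpen c)
    (hcov : ∀ C ∈ 𝒞, ⋃₀ C = Set.univ)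
    (href : ∀ U : Set (Set X), (∀ u ∈ U, IsOpen u) → ⋃₀ U = Set.univ →
      ∃ C ∈ 𝒞, ∀ c ∈ C, ∃ u ∈ U, c ⊆ u) :
    ∀ U : Set X, IsOpen U → ∀ x ∈ U, ∃ V ∈ ⋃₀ 𝒞, x ∈ V ∧ V ⊆ U := by
  intro U hU x hx
  obtain ⟨C, hC, hCr⟩ := href {U, {x}ᶜ}
    (by
      rintro u (rfl | rfl)
      · exact hU
      · exact isOpen_compl_singleton)
    (by
      apply Set.eq_univ_of_forall
      intro y
      by_cases h : y = x
      · exact ⟨U, Or.inl rfl, h ▸ hx⟩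
      · exact ⟨{x}ᶜ, Or.inr rfl, h⟩)
  have hxC : x ∈ ⋃₀ C := (hcov C hC).symm ▸ Set.mem_univ x
  obtain ⟨c, hcC, hxc⟩ := hxC
  obtain ⟨u, hu, hcu⟩ := hCr c hcC
  rcases hu with rfl | rfl
  · exact ⟨c, ⟨C, hC, hcC⟩, hxc, hcu⟩
  · exact absurd rfl (hcu hxc)
end

section
/- Let ℙ be an ω-poset. Every selector S ⊆ ℙ contains a minimal selector (minimal with respect to inclusion among selectors). -/
/-- `P` is an ω-poset: there is a rank function `r : P → ℕ` assigning `0` to maximal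
elements, with all levels finite. -/
def IsOmegaPoset (P : Type*) [PartialOrder P] : Prop :=
  ∃ r : P → ℕ, (∀ p : P, IsMax p → r p = 0) ∧ ∀ n : ℕ, {p : P | r p = n}.Finite

/-- A band: a finite subset comparable with every element of `P`. -/
def Band {P : Type*} [PartialOrder P] (B : Set P) : Prop :=
  B.Finite ∧ ∀ p : P, ∃ b ∈ B, b ≤ p ∨ p ≤ b

/-- A cap: a subset refined from below by a band. -/
def Cap {P : Type*} [PartialOrder P] (C : Set P) : Prop :=
  ∃ B : Set P, Band B ∧ ∀ b ∈ B, ∃ c ∈ C, b ≤ c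

/-- A selector: a subset meeting every cap. -/
def Selector {P : Type*} [PartialOrder P] (S : Set P) : Prop :=
  ∀ C : Set P, Cap C → (S ∩ C).Nonempty

/-- A minimal selector: inclusion-minimal among selectors. -/
def MinSelector {P : Type*} [PartialOrder P] (S : Set P) : Prop :=
  Selector S ∧ ∀ S' ⊆ S, Selector S' → S' = S

/-- The spectrum of `P`: the set of minimal selectors. -/
def Spec (P : Type*) [PartialOrder P] : Type _ :=
  {S : Set P // MinSelector S}

/-- The basic set `p^∈ = {S ∈ Sp P : p ∈ S}`. -/
def pin {P : Type*} [PartialOrder P] (p : P) : Set (Spec P) :=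
  {S | p ∈ S.1}

/-- Every cap contains a finite cap. -/
lemma cap_finite_subcap {P : Type*} [PartialOrder P] {C : Set P} (hC : Cap C) :
    ∃ C' ⊆ C, C'.Finite ∧ Cap C' := by
  obtain ⟨B, hB, hr⟩ := hC
  choose f hfC hfle using hr
  refine ⟨{x | ∃ b : B, f b b.2 = x}, ?_, ?_, B, hB, ?_⟩
  · rintro x ⟨b, rfl⟩; exact hfC b b.2
  · have : {x | ∃ b : B, f b b.2 = x} = Set.range (fun b : B => f b b.2) := by
      ext x; simp [Set.range, eq_comm]
    rw [this]
    haveI := hB.1.to_subtype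
    exact Set.finite_range _
  · intro b hb
    exact ⟨f b hb, ⟨⟨b, hb⟩, rfl⟩, hfle b hb⟩

/-- Every selector in an ω-poset contains a minimal selector. -/
theorem stmt6 {P : Type*} [PartialOrder P] (h : IsOmegaPoset P)
    (S : Set P) (hS : Selector S) :
    ∃ S' ⊆ S, MinSelector S' := by
  have key : ∀ c ⊆ {T : Set P | T ⊆ S ∧ Selector T}, IsChain (· ⊆ ·) c → c.Nonempty →
      ∃ lb ∈ {T : Set P | T ⊆ S ∧ Selector T}, ∀ s ∈ c, lb ⊆ s := by
    intro c hcs hchain hne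
    -- lower bound for a nonempty chain of selectors: its intersection
    refine ⟨⋂₀ c, ⟨?_, ?_⟩, fun s hs => Set.sInter_subset_of_mem hs⟩
    · obtain ⟨t, ht⟩ := hne
      exact (Set.sInter_subset_of_mem ht).trans (hcs ht).1
    · intro C hC
      obtain ⟨C', hC'C, hC'fin, hC'cap⟩ := cap_finite_subcap hC
      -- each member of the chain meets the finite cap C'
      by_contra hcon
      rw [Set.not_nonempty_iff_eq_empty, Set.eq_empty_iff_forall_notMem] at hcon
      -- for each x ∈ C', pick a member of the chain avoiding x
      have hx : ∀ x ∈ C', ∃ T ∈ c, x ∉ T := by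
        intro x hxC'
        by_contra hc2
        push_neg at hc2
        exact hcon x ⟨fun T hT => hc2 T hT, hC'C hxC'⟩
      choose g hg1 hg2 using hx
      -- the image of C' under g is a finite nonempty subset of the chain
      obtain ⟨x0, hx0⟩ : C'.Nonempty := by
        obtain ⟨B, hB, hr⟩ := hC'cap
        obtain ⟨b, hb, _⟩ := hB.2 (Classical.choice (by
          obtain ⟨y, _⟩ := hS C' ⟨B, hB, hr⟩; exact ⟨y⟩))
        obtain ⟨cc, hcc, _⟩ := hr b hb
        exact ⟨cc, hcc⟩
      set s : Set (Set P) := (fun x : C' => g x x.2) '' Set.univ with hs_def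
      have hs_fin : s.Finite := Set.Finite.image _ (by
        haveI := hC'fin.fintype; exact Set.finite_univ)
      have hs_ne : s.Nonempty := ⟨g x0 hx0, ⟨x0, hx0⟩, trivial, rfl⟩
      -- a chain restricted to a finite nonempty set has a minimum
      obtain ⟨m0, hm0s, hm0min⟩ : ∃ m0 ∈ s, ∀ t ∈ s, id t ≤ id m0 → id m0 = id t := by
        obtain ⟨m, hm, hmm⟩ := hs_fin.exists_minimalFor id s hs_ne
        exact ⟨m, hm, fun t ht h => le_antisymm (hmm ht h) h⟩
      have hm0c : m0 ∈ c := by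
        obtain ⟨x, _, rfl⟩ := hm0s
        exact hg1 x x.2
      have hm0le : ∀ t ∈ s, m0 ⊆ t := by
        intro t hts
        have htc : t ∈ c := by obtain ⟨x, _, rfl⟩ := hts; exact hg1 x x.2
        rcases eq_or_ne m0 t with rfl | hne'
        · exact Set.Subset.rfl
        · rcases hchain hm0c htc hne' with h1 | h2
          · exact h1
          · exact le_of_eq (hm0min t hts h2)
      -- m0 is a selector, so it meets C'; but g misses each point of C'
      obtain ⟨y, hym, hyC'⟩ := (hcs hm0c).2 C' hC'cap
      exact hg2 y hyC' (hm0le (g y hyC') ⟨⟨y, hyC'⟩, trivial, rfl⟩ hym)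
  obtain ⟨m, hmS, hmem, hmin⟩ :=
    zorn_superset_nonempty {T : Set P | T ⊆ S ∧ Selector T} key S ⟨Set.Subset.rfl, hS⟩
  exact ⟨m, hmem.1, hmem.2, fun S' hS'm hS' =>
    hS'm.antisymm (hmin ⟨hS'm.trans hmem.1, hS'⟩ hS'm)⟩
end

section
/- Let ℙ be an ω-poset. Then the spectrum Sp ℙ of minimal selectors, with the topology generated by the sets p^∈ = {S : p ∈ S}, is a compact T1 topological space, and a family C ⊆ ℙ has the property that {c^∈ : c ∈ C} covers Sp ℙ if and only if C is a cap. -/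
section Aux

variable {P : Type*} [PartialOrder P]

lemma band_cap {B : Set P} (hB : Band B) : Cap B :=
  ⟨B, hB, fun b hb => ⟨b, hb, le_rfl⟩⟩

lemma cap_mono {C D : Set P} (hC : Cap C) (h : C ⊆ D) : Cap D := by
  obtain ⟨B, hB, hr⟩ := hC
  exact ⟨B, hB, fun b hb => by obtain ⟨c, hc, hbc⟩ := hr b hb; exact ⟨c, h hc, hbc⟩⟩

lemma selector_iff {S : Set P} :
    Selector S ↔ ∀ B : Set P, Band B → ∃ b ∈ B, Set.Ici b ⊆ S := by
  constructor
  · intro hS B hB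
    by_contra hcon
    push_neg at hcon
    have hcap : Cap {c | c ∉ S ∧ ∃ b ∈ B, b ≤ c} := by
      refine ⟨B, hB, fun b hb => ?_⟩
      obtain ⟨c, hbc, hcS⟩ := Set.not_subset.1 (hcon b hb)
      exact ⟨c, ⟨hcS, b, hb, hbc⟩, hbc⟩
    obtain ⟨c, hcS, hc⟩ := hS _ hcap
    exact hc.1 hcS
  · intro h C hC
    obtain ⟨B, hB, hr⟩ := hC
    obtain ⟨b, hb, hIci⟩ := h B hB
    obtain ⟨c, hc, hbc⟩ := hr b hb
    exact ⟨c, hIci hbc, hc⟩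

/-- The union of all up-sets `Ici b` contained in `S`. -/
def upcore (S : Set P) : Set P := {p | ∃ b, b ≤ p ∧ Set.Ici b ⊆ S}

lemma upcore_subset (S : Set P) : upcore S ⊆ S :=
  fun _ ⟨_, hbp, hb⟩ => hb hbp

lemma upcore_upper (S : Set P) : IsUpperSet (upcore S) :=
  fun _ _ hpq ⟨b, hbp, hb⟩ => ⟨b, hbp.trans hpq, hb⟩

lemma upcore_selector {S : Set P} (hS : Selector S) : Selector (upcore S) := by
  rw [selector_iff] at hS ⊢
  intro B hB
  obtain ⟨b, hb, hIci⟩ := hS B hB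
  exact ⟨b, hb, fun q hq => ⟨b, hq, hIci⟩⟩

lemma selector_of_upper {S : Set P} (hU : IsUpperSet S)
    (h : ∀ B : Set P, Band B → (B ∩ S).Nonempty) : Selector S := by
  rw [selector_iff]
  intro B hB
  obtain ⟨b, hbB, hbS⟩ := h B hB
  exact ⟨b, hbB, fun q hq => hU hq hbS⟩

lemma exists_mem_chain_forall_not {c : Set (Set P)} (hc : IsChain (· ⊆ ·) c)
    (hne : c.Nonempty) {D : Set P} (hD : D.Finite) :
    (∀ b ∈ D, ∃ s ∈ c, b ∉ s) → ∃ s ∈ c, ∀ b ∈ D, b ∉ s := by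
  refine Set.Finite.induction_on (motive := fun D _ => (∀ b ∈ D, ∃ s ∈ c, b ∉ s) → ∃ s ∈ c, ∀ b ∈ D, b ∉ s) D hD ?_ ?_
  · intro _
    obtain ⟨s, hs⟩ := hne
    exact ⟨s, hs, by simp⟩
  · intro a D' _ _ IH h
    obtain ⟨s₁, hs₁, hs₁D⟩ := IH fun b hb => h b (Set.mem_insert_of_mem _ hb)
    obtain ⟨s₂, hs₂, ha₂⟩ := h a (Set.mem_insert _ _)
    rcases hc.total hs₁ hs₂ with hle | hle
    · exact ⟨s₁, hs₁, by
        rintro b (rfl | hb)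
        · exact fun hba => ha₂ (hle hba)
        · exact hs₁D b hb⟩
    · exact ⟨s₂, hs₂, by
        rintro b (rfl | hb)
        · exact ha₂
        · exact fun hbs => hs₁D b hb (hle hbs)⟩

lemma exists_minSelector {S : Set P} (hS : Selector S) : ∃ T ⊆ S, MinSelector T := by
  set F : Set (Set P) := {T | T ⊆ upcore S ∧ IsUpperSet T ∧ Selector T} with hF
  have hmem : upcore S ∈ F := ⟨subset_rfl, upcore_upper S, upcore_selector hS⟩
  have hchain : ∀ c ⊆ F, IsChain (· ⊆ ·) c → c.Nonempty →
      ∃ lb ∈ F, ∀ s ∈ c, lb ⊆ s := by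
    intro c hcF hc hne
    refine ⟨⋂₀ c, ⟨?_, ?_, ?_⟩, fun s hs => Set.sInter_subset_of_mem hs⟩
    · obtain ⟨s, hs⟩ := hne
      exact (Set.sInter_subset_of_mem hs).trans (hcF hs).1
    · intro p q hpq hp s hs
      exact (hcF hs).2.1 hpq (hp s hs)
    · refine selector_of_upper (fun p q hpq hp s hs => (hcF hs).2.1 hpq (hp s hs)) ?_
      intro B hB
      by_contra hemp
      rw [Set.not_nonempty_iff_eq_empty] at hemp
      have hforall : ∀ b ∈ B, ∃ s ∈ c, b ∉ s := by
        intro b hb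
        by_contra hcon
        push_neg at hcon
        exact absurd hemp (Set.nonempty_iff_ne_empty.1
          ⟨b, hb, fun s hs => hcon s hs⟩)
      obtain ⟨s, hs, hsB⟩ := exists_mem_chain_forall_not hc hne hB.1 hforall
      obtain ⟨b, hbs, hbB⟩ := (hcF hs).2.2 B (band_cap hB)
      exact hsB b hbB hbs
  obtain ⟨T, hTsub, hTF, hTmin⟩ := zorn_superset_nonempty F hchain (upcore S) hmem
  refine ⟨T, hTF.1.trans (upcore_subset S), hTF.2.2, ?_⟩
  intro S' hS' hsel
  have h1 : upcore S' ∈ F :=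
    ⟨(upcore_subset S').trans (hS'.trans hTF.1), upcore_upper _, upcore_selector hsel⟩
  have h2 : T ⊆ upcore S' := hTmin h1 ((upcore_subset S').trans hS')
  exact subset_antisymm hS' (h2.trans (upcore_subset S'))

lemma MinSelector.upper {S : Set P} (h : MinSelector S) : IsUpperSet S := by
  have := h.2 (upcore S) (upcore_subset S) (upcore_selector h.1)
  rw [← this]
  exact upcore_upper S

lemma cover_iff_cap (C : Set P) : (⋃ c ∈ C, pin c) = Set.univ ↔ Cap C := by
  constructor
  · intro h
    by_contra hC
    have hsel : Selector Cᶜ := by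
      intro D hD
      by_contra hemp
      rw [Set.not_nonempty_iff_eq_empty] at hemp
      have hDC : D ⊆ C := by
        intro d hd
        by_contra hdC
        exact absurd hemp (Set.nonempty_iff_ne_empty.1 ⟨d, hdC, hd⟩)
      exact hC (cap_mono hD hDC)
    obtain ⟨T, hTsub, hT⟩ := exists_minSelector hsel
    have hmem : (⟨T, hT⟩ : Spec P) ∈ ⋃ c ∈ C, pin c := h ▸ Set.mem_univ _
    replace hmem := Set.mem_iUnion₂.1 hmem
    obtain ⟨c, hcC, hcT⟩ := hmem
    exact hTsub hcT hcC
  · intro hC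
    ext S
    simp only [Set.mem_univ, iff_true, Set.mem_iUnion]
    obtain ⟨c, hcS, hcC⟩ := S.2.1 C hC
    exact ⟨c, hcC, hcS⟩

end Aux

/-- For an ω-poset `P`, the spectrum `Sp P` with the topology generated by the sets
`p^∈` is compact and `T1`, and a family `C ⊆ P` covers `Sp P` (via `c ↦ c^∈`)
iff `C` is a cap. -/
theorem stmt9 {P : Type*} [PartialOrder P] (h : IsOmegaPoset P) :
    @CompactSpace (Spec P)
        (TopologicalSpace.generateFrom (Set.range (pin (P := P)))) ∧
      @T1Space (Spec P)
        (TopologicalSpace.generateFrom (Set.range (pin (P := P)))) ∧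
      ∀ C : Set P, (⋃ c ∈ C, pin c) = Set.univ ↔ Cap C := by
  letI : TopologicalSpace (Spec P) :=
    TopologicalSpace.generateFrom (Set.range (pin (P := P)))
  refine ⟨?_, ?_, fun C => cover_iff_cap C⟩
  · -- compactness via ultrafilters
    constructor
    rw [isCompact_iff_ultrafilter_le_nhds]
    intro f _
    set A : Set P := {p | pin p ∈ f} with hA
    have hAupper : IsUpperSet A := by
      intro p q hpq hp
      exact f.mem_of_superset hp (fun S hS => S.2.upper hpq hS)
    have hAsel : Selector A := by
      refine selector_of_upper hAupper ?_
      intro B hB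
      have huniv : (⋃ b ∈ B, pin b) = Set.univ := (cover_iff_cap B).2 (band_cap hB)
      have hmem : (⋃ b ∈ B, pin b) ∈ f := by rw [huniv]; exact Filter.univ_mem
      obtain ⟨b, hbB, hbf⟩ := (Ultrafilter.finite_biUnion_mem_iff hB.1).1 hmem
      exact ⟨b, hbB, hbf⟩
    obtain ⟨T, hTsub, hT⟩ := exists_minSelector hAsel
    refine ⟨⟨T, hT⟩, Set.mem_univ _, ?_⟩
    refine le_of_le_of_eq ?_ (TopologicalSpace.nhds_generateFrom (g := Set.range (pin (P := P))) (a := (⟨T, hT⟩ : Spec P))).symm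
    refine le_iInf₂ fun s hs => ?_
    obtain ⟨hxs, p, rfl⟩ := hs
    exact Filter.le_principal_iff.2 (hTsub hxs)
  · -- T1
    rw [t1Space_iff_exists_open]
    intro S T hne
    have hnsub : ¬ S.1 ⊆ T.1 := by
      intro hsub
      exact hne (Subtype.ext (T.2.2 S.1 hsub S.2.1))
    obtain ⟨p, hpS, hpT⟩ := Set.not_subset.1 hnsub
    exact ⟨pin p, TopologicalSpace.isOpen_generateFrom_of_mem ⟨p, rfl⟩, hpS, hpT⟩
end

section
/- Let ℙ be a level-injective ω-chain. Then for every n, the family {p^∈ : p ∈ ℙ_n} is a minimal cover of Sp ℙ; in particular p^∈ ≠ ∅ for every p ∈ ℙ. -/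
/-- `(lvl, step)` is an ω-chain: levels are finite, `step` goes from level `n`
to level `n+1`, and `step` is co-surjective (every element at a positive level
has a `step`-predecessor). -/
structure IsOmegaChain {α : Type*} (lvl : α → ℕ) (step : α → α → Prop) : Prop where
  fin : ∀ n : ℕ, {a : α | lvl a = n}.Finite
  hstep : ∀ a b : α, step a b → lvl b = lvl a + 1
  cosurj : ∀ b : α, 0 < lvl b → ∃ a : α, step a b

/-- Level-injectivity: each `step` relation is co-injective. -/
def LevelInjective {α : Type*} (step : α → α → Prop) : Prop :=
  ∀ a : α, ∃ b : α, step a b ∧ ∀ a' : α, step a' b → a' = a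

/-- The ω-chain ordering `a ≥ b`: the reflexive–transitive closure of `step`. -/
def chainGe {α : Type*} (step : α → α → Prop) : α → α → Prop :=
  Relation.ReflTransGen step

/-- A band: a finite subset comparable with every element. -/
def BandC {α : Type*} (step : α → α → Prop) (B : Set α) : Prop :=
  B.Finite ∧ ∀ p : α, ∃ b ∈ B, chainGe step b p ∨ chainGe step p b

/-- A cap: a subset refined from below by a band. -/
def CapC {α : Type*} (step : α → α → Prop) (C : Set α) : Prop :=
  ∃ B : Set α, BandC step B ∧ ∀ b ∈ B, ∃ c ∈ C, chainGe step c b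

/-- A selector: a subset meeting every cap. -/
def SelectorC {α : Type*} (step : α → α → Prop) (S : Set α) : Prop :=
  ∀ C : Set α, CapC step C → (S ∩ C).Nonempty

/-- A minimal selector. -/
def MinSelectorC {α : Type*} (step : α → α → Prop) (S : Set α) : Prop :=
  SelectorC step S ∧ ∀ S' ⊆ S, SelectorC step S' → S' = S

/-- The spectrum: the set of minimal selectors. -/
def SpecC {α : Type*} (step : α → α → Prop) : Type _ :=
  {S : Set α // MinSelectorC step S}

/-- The basic set `p^∈ = {S ∈ Sp : p ∈ S}`. -/
def pinC {α : Type*} (step : α → α → Prop) (p : α) : Set (SpecC step) :=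
  {S | p ∈ S.1}

section Aux

variable {α : Type*} {lvl : α → ℕ} {step : α → α → Prop}

lemma lvl_le_of_chainGe (h : IsOmegaChain lvl step) {a b : α}
    (hab : chainGe step a b) : lvl a ≤ lvl b := by
  induction hab with
  | refl => exact le_refl _
  | tail _ hzb ih => rw [h.hstep _ _ hzb]; omega

lemma eq_of_chainGe_lvl (h : IsOmegaChain lvl step) {a b : α}
    (hab : chainGe step a b) (hl : lvl b ≤ lvl a) : a = b := by
  induction hab with
  | refl => rfl
  | tail haz hzb ih =>
    exfalso
    have := lvl_le_of_chainGe h haz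
    have := h.hstep _ _ hzb
    omega

/-- ancestors at every lower level -/
lemma exists_ancestor (h : IsOmegaChain lvl step) (m : ℕ) :
    ∀ k (b : α), lvl b = m + k → ∃ c, lvl c = m ∧ chainGe step c b := by
  intro k
  induction k with
  | zero => intro b hb; exact ⟨b, by omega, Relation.ReflTransGen.refl⟩
  | succ k ih =>
    intro b hb
    obtain ⟨a, ha⟩ := h.cosurj b (by omega)
    have hla := h.hstep _ _ ha
    obtain ⟨c, hc1, hc2⟩ := ih a (by omega)
    exact ⟨c, hc1, hc2.tail ha⟩

/-- a chosen successor function with unique predecessors -/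
noncomputable def succF (hinj : LevelInjective step) (a : α) : α :=
  (hinj a).choose

lemma succF_step (hinj : LevelInjective step) (a : α) : step a (succF hinj a) := (hinj a).choose_spec.1

lemma succF_unique (hinj : LevelInjective step) {a a' : α} (ha' : step a' (succF hinj a)) : a' = a :=
  (hinj a).choose_spec.2 a' ha'

lemma lvl_succF_iterate (h : IsOmegaChain lvl step) (hinj : LevelInjective step) (a : α) : ∀ k, lvl ((succF hinj)^[k] a) = lvl a + k := by
  intro k
  induction k with
  | zero => simp
  | succ k ih =>
    rw [Function.iterate_succ_apply', h.hstep _ _ (succF_step hinj _)]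
    omega

lemma chainGe_succF_iterate (hinj : LevelInjective step) (a : α) : ∀ k, chainGe step a ((succF hinj)^[k] a) := by
  intro k
  induction k with
  | zero => exact Relation.ReflTransGen.refl
  | succ k ih =>
    rw [Function.iterate_succ_apply']
    exact ih.tail (succF_step hinj _)

/-- each level set is a band -/
lemma band_level (h : IsOmegaChain lvl step) (hinj : LevelInjective step) (m : ℕ) : BandC step {a : α | lvl a = m} := by
  refine ⟨h.fin m, fun p => ?_⟩
  rcases le_or_gt m (lvl p) with hm | hm
  · obtain ⟨c, hc1, hc2⟩ := exists_ancestor h m (lvl p - m) p (by omega)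
    exact ⟨c, hc1, Or.inl hc2⟩
  · refine ⟨(succF hinj)^[m - lvl p] p, ?_, Or.inr (chainGe_succF_iterate hinj p _)⟩
    rw [Set.mem_setOf_eq, lvl_succF_iterate h hinj]
    omega

/-- each level set is a cap -/
lemma cap_level (h : IsOmegaChain lvl step) (hinj : LevelInjective step) (m : ℕ) : CapC step {a : α | lvl a = m} :=
  ⟨_, band_level h hinj m, fun b hb => ⟨b, hb, Relation.ReflTransGen.refl⟩⟩

/-- finitary characterization of selectors -/
lemma selector_iff_s10 (h : IsOmegaChain lvl step) (hinj : LevelInjective step) (S : Set α) :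
    SelectorC step S ↔ ∀ m : ℕ, ∃ b, lvl b = m ∧ ∀ c, chainGe step c b → c ∈ S := by
  constructor
  · intro hS m
    by_contra hcon
    push_neg at hcon
    set C : Set α := {c | c ∉ S ∧ ∃ b, lvl b = m ∧ chainGe step c b} with hC
    have hcap : CapC step C := by
      refine ⟨_, band_level h hinj m, fun b hb => ?_⟩
      obtain ⟨c, hc1, hc2⟩ := hcon b hb
      exact ⟨c, ⟨hc2, b, hb, hc1⟩, hc1⟩
    obtain ⟨c, hcS, hcC⟩ := hS C hcap
    exact hcC.1 hcS
  · rintro hS C ⟨B, ⟨hBfin, hBband⟩, hBC⟩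
    obtain ⟨b, hb1, hb2⟩ := hS (hBfin.toFinset.sup lvl + 1)
    obtain ⟨b', hb'B, hcomp⟩ := hBband b
    have hlb' : lvl b' ≤ hBfin.toFinset.sup lvl :=
      Finset.le_sup (hBfin.mem_toFinset.mpr hb'B)
    have hb'b : chainGe step b' b := by
      rcases hcomp with hc | hc
      · exact hc
      · exact absurd (lvl_le_of_chainGe h hc) (by omega)
    obtain ⟨c, hcC, hcb'⟩ := hBC b' hb'B
    exact ⟨c, hb2 c (hcb'.trans hb'b), hcC⟩

/-- every selector contains a minimal selector -/
lemma exists_minSelector_s10 (h : IsOmegaChain lvl step) (hinj : LevelInjective step) {S : Set α} (hS : SelectorC step S) :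
    ∃ S' ⊆ S, MinSelectorC step S' := by
  set 𝒮 : Set (Set α) := {T | T ⊆ S ∧ SelectorC step T} with h𝒮
  have hz : ∀ c ⊆ 𝒮, IsChain (fun x1 x2 => x1 ⊆ x2) c → c.Nonempty →
      ∃ lb ∈ 𝒮, ∀ s ∈ c, lb ⊆ s := by
    intro c hc𝒮 hchain ⟨T₀, hT₀⟩
    refine ⟨⋂₀ c, ⟨(Set.sInter_subset_of_mem hT₀).trans (hc𝒮 hT₀).1, ?_⟩,
      fun s hs => Set.sInter_subset_of_mem hs⟩
    rw [selector_iff_s10 h hinj]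
    intro m
    -- the "good" sets at level m
    set A : Set α → Set α := fun T => {b | lvl b = m ∧ ∀ c', chainGe step c' b → c' ∈ T}
      with hA
    have hAfin : ∀ T, (A T).Finite := fun T => (h.fin m).subset (fun b hb => hb.1)
    have hAne : ∀ T ∈ c, (A T).Nonempty := by
      intro T hT
      obtain ⟨b, hb1, hb2⟩ := (selector_iff_s10 h hinj T).mp (hc𝒮 hT).2 m
      exact ⟨b, hb1, hb2⟩
    have hAmono : ∀ T T' : Set α, T ⊆ T' → A T ⊆ A T' :=
      fun T T' hTT' b hb => ⟨hb.1, fun c' hc' => hTT' (hb.2 c' hc')⟩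
    -- pick Tm minimizing the cardinality of A T
    set N : Set ℕ := {k | ∃ T ∈ c, (A T).ncard = k} with hN
    have hNne : N.Nonempty := ⟨(A T₀).ncard, T₀, hT₀, rfl⟩
    obtain ⟨Tm, hTmc, hTmcard⟩ := Nat.sInf_mem hNne
    have hmin : ∀ T ∈ c, A Tm ⊆ A T := by
      intro T hT
      rcases eq_or_ne T Tm with rfl | hne
      · exact le_refl _
      rcases hchain hT hTmc hne with hsub | hsub
      · have hsub' := hAmono T Tm hsub
        have hcard : (A Tm).ncard ≤ (A T).ncard := hTmcard ▸ Nat.sInf_le ⟨T, hT, rfl⟩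
        rw [Set.eq_of_subset_of_ncard_le hsub' hcard (hAfin _)]
      · exact hAmono _ _ hsub
    obtain ⟨b, hb⟩ := hAne Tm hTmc
    refine ⟨b, hb.1, fun c' hc' => ?_⟩
    rw [Set.mem_sInter]
    intro T hT
    exact (hmin T hT hb).2 c' hc'
  obtain ⟨m, hmS, hmin⟩ := zorn_superset_nonempty 𝒮 hz S ⟨le_refl _, hS⟩
  exact ⟨m, hmS, hmin.prop.2, fun T hTm hT => hmin.eq_of_le ⟨hTm.trans hmin.prop.1, hT⟩ hTm⟩

/-- the branch selector through p -/
lemma branch_facts (h : IsOmegaChain lvl step) (hinj : LevelInjective step) (p : α) :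
    ∃ T : Set α, SelectorC step T ∧ ∀ a ∈ T, lvl a = lvl p → a = p := by
  set f := succF (step := step) hinj with hf
  set T : Set α := {a | ∃ k, chainGe step a (f^[k] p)} with hT
  have key : ∀ k c, chainGe step c (f^[k] p) → chainGe step c p ∨ ∃ j, c = f^[j] p := by
    intro k
    induction k with
    | zero => intro c hc; exact Or.inl hc
    | succ k ih =>
      intro c hc
      rw [Function.iterate_succ_apply'] at hc
      rcases hc.cases_tail with heq | ⟨z, hcz, hz⟩
      · exact Or.inr ⟨k + 1, by rw [← heq, Function.iterate_succ_apply']⟩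
      · have := succF_unique hinj hz
        subst this
        exact ih c hcz
  refine ⟨T, ?_, ?_⟩
  · rw [selector_iff_s10 h hinj]
    intro m
    rcases le_or_gt (lvl p) m with hm | hm
    · refine ⟨f^[m - lvl p] p, ?_, fun c hc => ⟨m - lvl p, hc⟩⟩
      rw [lvl_succF_iterate h hinj]; omega
    · obtain ⟨b, hb1, hb2⟩ := exists_ancestor h m (lvl p - m) p (by omega)
      exact ⟨b, hb1, fun c hc => ⟨0, by rw [Function.iterate_zero_apply]; exact hc.trans hb2⟩⟩
  · rintro a ⟨k, hk⟩ hla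
    rcases key k a hk with hap | ⟨j, rfl⟩
    · exact eq_of_chainGe_lvl h hap (le_of_eq hla.symm)
    · have := lvl_succF_iterate h hinj p j
      rw [hla] at this
      have : j = 0 := by omega
      rw [this, Function.iterate_zero_apply]

end Aux

/-- For a level-injective ω-chain, each family `{p^∈ : lvl p = n}` is a minimal cover
of the spectrum; in particular every `p^∈` is non-empty. -/
theorem stmt10 {α : Type*} (lvl : α → ℕ) (step : α → α → Prop)
    (h : IsOmegaChain lvl step) (hinj : LevelInjective step) :
    (∀ n : ℕ,
        (⋃ p ∈ {a : α | lvl a = n}, pinC step p) = Set.univ ∧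
        ∀ p : α, lvl p = n →
          (⋃ q ∈ {a : α | lvl a = n} \ {p}, pinC step q) ≠ Set.univ) ∧
      ∀ p : α, (pinC step p).Nonempty := by
  -- the key construction: for every p, a minimal selector whose unique element
  -- at level (lvl p) is p
  have key : ∀ p : α, ∃ x : SpecC step, p ∈ x.1 ∧
      ∀ q ∈ x.1, lvl q = lvl p → q = p := by
    intro p
    obtain ⟨T, hTsel, hTuniq⟩ := branch_facts h hinj p
    obtain ⟨S', hS'T, hS'min⟩ := exists_minSelector_s10 h hinj hTsel
    obtain ⟨q, hqS', hq⟩ := hS'min.1 _ (cap_level h hinj (lvl p))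
    have hq' : q = p := hTuniq q (hS'T hqS') hq
    refine ⟨⟨S', hS'min⟩, hq' ▸ hqS', fun q' hq'S' hlq' => hTuniq q' (hS'T hq'S') hlq'⟩
  constructor
  · intro n
    constructor
    · ext x
      simp only [Set.mem_iUnion, Set.mem_univ, iff_true, Set.mem_setOf_eq]
      obtain ⟨q, hqx, hq⟩ := x.2.1 _ (cap_level h hinj n)
      exact ⟨q, hq, hqx⟩
    · intro p hp hcon
      obtain ⟨x, hpx, hx⟩ := key p
      have : x ∈ ⋃ q ∈ {a : α | lvl a = n} \ {p}, pinC step q := by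
        rw [hcon]; exact Set.mem_univ x
      rw [Set.mem_iUnion₂] at this
      obtain ⟨q, ⟨hql, hqp⟩, hqx⟩ := this
      exact hqp (hx q hqx (hp ▸ hql))
  · intro p
    obtain ⟨x, hpx, _⟩ := key p
    exact ⟨x, hpx⟩
end

section
/- Let ℙ_n (n ∈ ℕ) be minimal finite covers of a set X such that each ℙ_n is a consolidation of ℙ_{n+1} (every element of ℙ_n is the union of those elements of ℙ_{n+1} contained in it). Then the poset ⨆ℙ_n ordered by reverse inclusion equals the ω-chain generated by the consecutive-level relations: for m < n, p ∈ ℙ_m, q ∈ ℙ_n, p ⊇ q holds iff there is a chain p = p_m ⊇ p_{m+1} ⊇ ... ⊇ p_n = q with p_k ∈ ℙ_k. -/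
/-- Let `Ps n` be minimal finite covers of a set such that each `Ps n` consolidates
`Ps (n+1)`. Then for `m < n`, `p ∈ Ps m`, `q ∈ Ps n`, the inclusion `q ⊆ p` holds iff
there is a chain `p = p_m ⊇ p_{m+1} ⊇ ⋯ ⊇ p_n = q` with `p_k ∈ Ps k`; i.e. the poset
`⨆ Ps n` ordered by reverse inclusion is the ω-chain generated by consecutive levels. -/
theorem stmt12 {α : Type*} (Ps : ℕ → Set (Set α))
    (hfin : ∀ n, (Ps n).Finite)
    (hcov : ∀ n, ⋃₀ Ps n = Set.univ)
    (hmin : ∀ n, ∀ p ∈ Ps n, ⋃₀ (Ps n \ {p}) ≠ Set.univ)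
    (hcons : ∀ n, ∀ p ∈ Ps n, p = ⋃₀ {q ∈ Ps (n + 1) | q ⊆ p}) :
    ∀ m n : ℕ, m < n → ∀ p ∈ Ps m, ∀ q ∈ Ps n,
      (q ⊆ p ↔
        ∃ f : ℕ → Set α, f m = p ∧ f n = q ∧
          (∀ k, m ≤ k → k ≤ n → f k ∈ Ps k) ∧
          (∀ k, m ≤ k → k < n → f (k + 1) ⊆ f k)) := by
  intro m n hmn p hp q hq
  constructor
  · intro hqp
    -- witness point: x ∈ q, x not in any other member of Ps n
    obtain ⟨x, hx⟩ : ∃ x, x ∉ ⋃₀ (Ps n \ {q}) := by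
      by_contra h
      push_neg at h
      exact hmin n q hq (Set.eq_univ_of_forall h)
    have hxq : x ∈ q := by
      have : x ∈ ⋃₀ Ps n := by rw [hcov]; trivial
      obtain ⟨s, hs, hxs⟩ := this
      by_cases hsq : s = q
      · exact hsq ▸ hxs
      · exact absurd ⟨s, ⟨hs, hsq⟩, hxs⟩ hx
    -- going one level down: a witness-containing element inside any witness-containing element
    have step : ∀ j, ∀ r : Set α, r ∈ Ps (m + j) → x ∈ r →
        ∃ s, s ∈ Ps (m + j + 1) ∧ x ∈ s ∧ s ⊆ r := by
      intro j r hr hxr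
      have hc := hcons (m + j) r hr
      have hx' : x ∈ ⋃₀ {t ∈ Ps (m + j + 1) | t ⊆ r} := hc ▸ hxr
      obtain ⟨s, ⟨hs1, hs2⟩, hs3⟩ := hx'
      exact ⟨s, hs1, hs3, hs2⟩
    -- build the chain
    let g : ∀ j : ℕ, {s : Set α // s ∈ Ps (m + j) ∧ x ∈ s} := fun j =>
      Nat.rec ⟨p, by simpa using hp, hqp hxq⟩
        (fun j r => ⟨(step j r.1 r.2.1 r.2.2).choose,
          (step j r.1 r.2.1 r.2.2).choose_spec.1,
          (step j r.1 r.2.1 r.2.2).choose_spec.2.1⟩) j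
    have gsub : ∀ j, (g (j + 1)).1 ⊆ (g j).1 := fun j =>
      (step j (g j).1 (g j).2.1 (g j).2.2).choose_spec.2.2
    refine ⟨fun k => (g (k - m)).1, ?_, ?_, ?_, ?_⟩
    · show (g (m - m)).1 = p
      rw [Nat.sub_self]
      rfl
    · -- f n = q
      have h1 : (g (n - m)).1 ∈ Ps n := by
        have h := (g (n - m)).2.1
        have e : Ps (m + (n - m)) = Ps n := by rw [show m + (n - m) = n by omega]
        exact e ▸ h
      have h2 : x ∈ (g (n - m)).1 := (g (n - m)).2.2
      by_contra hne
      exact hx ⟨(g (n - m)).1, ⟨h1, hne⟩, h2⟩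
    · intro k hk _
      have h := (g (k - m)).2.1
      have e : Ps (m + (k - m)) = Ps k := by rw [show m + (k - m) = k by omega]
      exact e ▸ h
    · intro k hk _
      have := gsub (k - m)
      rwa [show k - m + 1 = k + 1 - m by omega] at this
  · rintro ⟨f, hfm, hfn, hmem, hsub⟩
    have key : ∀ k, m ≤ k → k ≤ n → f k ⊆ f m := by
      intro k hk
      induction k, hk using Nat.le_induction with
      | base => intro _; exact subset_rfl
      | succ k hk ih =>
        intro hkn
        exact (hsub k hk (by omega)).trans (ih (by omega))
    have := key n (le_of_lt hmn) le_rfl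
    rw [hfm, hfn] at this
    exact this
end

section
/- Let X be a second-countable compact T1 space. Then there exist minimal finite open covers ℙ_n of X (n ∈ ℕ) such that every ℙ_n consolidates ℙ_{n+1}, and every open cover of X is refined by some ℙ_n. -/
open Set

/-- Auxiliary property: every point lies in a member of `S` contained in all members of
`A` containing the point. -/
def QQ {X : Type*} (A : Set (Set X)) (S : Set (Set X)) : Prop :=
  ∀ x : X, ∃ c ∈ S, x ∈ c ∧ ∀ a ∈ A, x ∈ a → c ⊆ a

lemma punct {X : Type*} [TopologicalSpace X] [T1Space X] (A : Set (Set X)) :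
    ∀ F : Finset (Set X), (∀ c ∈ F, IsOpen c) → QQ A ↑F →
    ∃ B : Set (Set X), MinOpenCover B ∧ (∀ b ∈ B, ∃ c ∈ F, b ⊆ c) ∧ QQ A B := by
  classical
  by_cases hne : Nonempty X
  swap
  · intro F _ _
    refine ⟨∅, ⟨finite_empty, by simp, ?_, by simp⟩, by simp, fun x => absurd ⟨x⟩ hne⟩
    have : (univ : Set X) = ∅ := by
      simp [Set.eq_empty_iff_forall_notMem]; intro x; exact absurd ⟨x⟩ hne
    simp [this]
  intro F
  induction F using Finset.strongInduction with
  | _ F ih =>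
    intro hFo hQ
    by_cases hdel : ∃ c ∈ F, QQ A ↑(F.erase c)
    · obtain ⟨c, hc, hQ'⟩ := hdel
      obtain ⟨B, hB1, hB2, hB3⟩ := ih (F.erase c) (Finset.erase_ssubset hc)
        (fun c' hc' => hFo c' (Finset.mem_of_mem_erase hc')) hQ'
      exact ⟨B, hB1, fun b hb => (hB2 b hb).imp fun c' hc' =>
        ⟨Finset.mem_of_mem_erase hc'.1, hc'.2⟩, hB3⟩
    · push_neg at hdel
      have hx : ∀ c ∈ F, ∃ x : X, (x ∈ c ∧ ∀ a ∈ A, x ∈ a → c ⊆ a) ∧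
          ∀ c' ∈ F, c' ≠ c → x ∈ c' → ∃ a ∈ A, x ∈ a ∧ ¬ c' ⊆ a := by
        intro c hc
        have h1 := hdel c hc
        rw [QQ] at h1
        push_neg at h1
        obtain ⟨x, hxall⟩ := h1
        obtain ⟨c'', hc''F, hxc'', hsub⟩ := hQ x
        have hc''eq : c'' = c := by
          by_contra hne'
          obtain ⟨a, ha, hxa, hnsub⟩ :=
            hxall c'' (Finset.mem_coe.mpr (Finset.mem_erase.mpr ⟨hne', hc''F⟩)) hxc''
          exact hnsub (hsub a ha hxa)
        subst hc''eq
        refine ⟨x, ⟨hxc'', hsub⟩, ?_⟩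
        intro c' hc' hne' hxc'
        exact hxall c' (Finset.mem_coe.mpr (Finset.mem_erase.mpr ⟨hne', hc'⟩)) hxc'
      choose! xw hxw1 hxw2 using hx
      have hdist : ∀ c ∈ F, ∀ c' ∈ F, xw c = xw c' → c = c' := by
        intro c hc c' hc' heq
        by_contra hne'
        obtain ⟨a, ha, hxa, hnsub⟩ :=
          hxw2 c hc c' hc' (fun h => hne' h.symm) (heq ▸ (hxw1 c' hc').1)
        exact hnsub ((hxw1 c' hc').2 a ha (heq ▸ hxa))
      set pb : Set X → Set X := fun c => c \ (xw '' ((↑F : Set (Set X)) \ {c})) with hpb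
      have hmemself : ∀ c ∈ F, xw c ∈ pb c := by
        intro c hc
        refine ⟨(hxw1 c hc).1, ?_⟩
        rintro ⟨c'', ⟨hc''F, hc''ne⟩, heq⟩
        exact hc''ne (hdist c'' hc''F c hc heq)
      have hnotmem : ∀ c ∈ F, ∀ c' ∈ F, c ≠ c' → xw c ∉ pb c' := by
        intro c hc c' hc' hne' h
        exact h.2 ⟨c, ⟨hc, fun hmem => hne' (by simpa using hmem)⟩, rfl⟩
      have hQB : QQ A (pb '' ↑F) := by
        intro x
        by_cases hxc : ∃ c ∈ F, x = xw c
        · obtain ⟨c, hc, rfl⟩ := hxc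
          exact ⟨pb c, mem_image_of_mem _ hc, hmemself c hc,
            fun a ha hxa => (diff_subset.trans ((hxw1 c hc).2 a ha hxa))⟩
        · obtain ⟨c, hcF, hxmem, hsub⟩ := hQ x
          refine ⟨pb c, mem_image_of_mem _ hcF, ⟨hxmem, ?_⟩,
            fun a ha hxa => diff_subset.trans (hsub a ha hxa)⟩
          rintro ⟨c'', ⟨hc''F, -⟩, heq⟩
          exact hxc ⟨c'', hc''F, heq.symm⟩
      refine ⟨pb '' ↑F, ?_, ?_, hQB⟩
      · refine ⟨Set.Finite.image _ F.finite_toSet, ?_, ?_, ?_⟩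
        · rintro b ⟨c, hc, rfl⟩
          exact (hFo c hc).sdiff (Set.Finite.isClosed ((F.finite_toSet.diff).image xw))
        · apply Set.eq_univ_of_forall
          intro x
          obtain ⟨b, hb, hxb, -⟩ := hQB x
          exact ⟨b, hb, hxb⟩
        · rintro b ⟨c, hc, rfl⟩ hcontra
          have : xw c ∈ ⋃₀ (pb '' ↑F \ {pb c}) := hcontra ▸ Set.mem_univ _
          obtain ⟨b', ⟨⟨c', hc', rfl⟩, hne'⟩, hxb'⟩ := this
          have hcc' : c ≠ c' := fun h => hne' (by rw [h]; rfl)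
          exact hnotmem c hc c' hc' hcc' hxb'
      · rintro b ⟨c, hc, rfl⟩
        exact ⟨c, hc, diff_subset⟩

lemma keyLemma {X : Type*} [TopologicalSpace X] [CompactSpace X] [T1Space X]
    (A : Set (Set X)) (hAf : A.Finite) (hAo : ∀ a ∈ A, IsOpen a)
    (U : Set (Set X)) (hUo : ∀ u ∈ U, IsOpen u) (hUc : ⋃₀ U = Set.univ) :
    ∃ B : Set (Set X), MinOpenCover B ∧ (∀ b ∈ B, ∃ u ∈ U, b ⊆ u) ∧ QQ A B := by
  classical
  -- finite subcover
  have hcov : (Set.univ : Set X) ⊆ ⋃ u ∈ U, (id u : Set X) := by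
    intro x _
    have : x ∈ ⋃₀ U := hUc ▸ mem_univ x
    obtain ⟨u, hu, hxu⟩ := this
    simp only [mem_iUnion, id]
    exact ⟨u, hu, hxu⟩
  obtain ⟨U₀, hU₀U, hU₀fin, hU₀cov⟩ :=
    isCompact_univ.elim_finite_subcover_image (fun u hu => hUo u hu) hcov
  -- the family of intersections
  set C : Set (Set X) := (fun p : Set (Set X) × Set X => ⋂₀ p.1 ∩ p.2) ''
      ({A' | A' ⊆ A} ×ˢ U₀) with hC
  have hCfin : C.Finite := ((hAf.finite_subsets).prod hU₀fin).image _
  have hCopen : ∀ c ∈ C, IsOpen c := by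
    rintro c ⟨⟨A', u⟩, ⟨hA', hu⟩, rfl⟩
    exact ((hAf.subset hA').isOpen_sInter (fun a ha => hAo a (hA' ha))).inter
      (hUo u (hU₀U hu))
  have hCQ : QQ A C := by
    intro x
    have hxU : x ∈ ⋃ u ∈ U₀, (id u : Set X) := hU₀cov (mem_univ x)
    simp only [mem_iUnion, id] at hxU
    obtain ⟨u, hu, hxu⟩ := hxU
    refine ⟨⋂₀ {a ∈ A | x ∈ a} ∩ u, ⟨⟨{a ∈ A | x ∈ a}, u⟩, ⟨fun a ha => ha.1, hu⟩, rfl⟩,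
      ⟨?_, hxu⟩, ?_⟩
    · exact fun a ha => ha.2
    · intro a ha hxa
      exact fun y hy => (hy.1 a ⟨ha, hxa⟩)
  obtain ⟨B, hB1, hB2, hB3⟩ := punct A hCfin.toFinset
    (by intro c hc; exact hCopen c (hCfin.mem_toFinset.mp hc))
    (by intro x; obtain ⟨c, hc, h1, h2⟩ := hCQ x
        exact ⟨c, by simpa using hCfin.mem_toFinset.mpr hc, h1, h2⟩)
  refine ⟨B, hB1, ?_, hB3⟩
  rintro b hb
  obtain ⟨c, hc, hbc⟩ := hB2 b hb
  obtain ⟨⟨A', u⟩, ⟨-, hu⟩, rfl⟩ := hCfin.mem_toFinset.mp hc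
  exact ⟨u, hU₀U hu, hbc.trans inter_subset_right⟩

lemma enumCovers {X : Type*} [TopologicalSpace X] [SecondCountableTopology X]
    [CompactSpace X] :
    ∃ e : ℕ → Set (Set X),
      (∀ k, ∀ s ∈ e k, IsOpen s) ∧ (∀ k, ⋃₀ e k = Set.univ) ∧
      ∀ U : Set (Set X), (∀ u ∈ U, IsOpen u) → ⋃₀ U = Set.univ →
        ∃ k, ∀ s ∈ e k, ∃ u ∈ U, s ⊆ u := by
  classical
  obtain ⟨b, hbc, -, hbasis⟩ := TopologicalSpace.exists_countable_basis X
  set D : Set (Set (Set X)) := {F | F.Finite ∧ F ⊆ b ∧ ⋃₀ F = Set.univ} with hD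
  have hDc : D.Countable := by
    apply Set.Countable.mono _ (Set.countable_setOf_finite_subset hbc)
    intro F hF
    exact ⟨hF.1, hF.2.1⟩
  -- D is nonempty
  have hbcov : (Set.univ : Set X) ⊆ ⋃ s ∈ b, (id s : Set X) := by
    intro x _
    have : x ∈ ⋃₀ b := hbasis.sUnion_eq ▸ mem_univ x
    obtain ⟨s, hs, hxs⟩ := this
    simp only [mem_iUnion, id]
    exact ⟨s, hs, hxs⟩
  obtain ⟨F₀, hF₀b, hF₀fin, hF₀cov⟩ :=
    isCompact_univ.elim_finite_subcover_image (fun s hs => hbasis.isOpen hs) hbcov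
  have hF₀D : F₀ ∈ D := by
    refine ⟨hF₀fin, hF₀b, ?_⟩
    apply Set.eq_univ_of_univ_subset
    intro x hx
    have := hF₀cov hx
    simp only [mem_iUnion, id] at this
    obtain ⟨s, hs, hxs⟩ := this
    exact ⟨s, hs, hxs⟩
  obtain ⟨e, he⟩ := hDc.exists_eq_range ⟨F₀, hF₀D⟩
  have heD : ∀ k, e k ∈ D := fun k => he ▸ Set.mem_range_self k
  refine ⟨e, fun k s hs => hbasis.isOpen ((heD k).2.1 hs), fun k => (heD k).2.2, ?_⟩
  intro U hUo hUc
  set V : Set (Set X) := {s ∈ b | ∃ u ∈ U, s ⊆ u} with hV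
  have hVcov : (Set.univ : Set X) ⊆ ⋃ s ∈ V, (id s : Set X) := by
    intro x _
    have hxU : x ∈ ⋃₀ U := hUc ▸ mem_univ x
    obtain ⟨u, hu, hxu⟩ := hxU
    obtain ⟨s, hsb, hxs, hsu⟩ := hbasis.exists_subset_of_mem_open hxu (hUo u hu)
    simp only [mem_iUnion, id]
    exact ⟨s, ⟨hsb, u, hu, hsu⟩, hxs⟩
  obtain ⟨V₀, hV₀V, hV₀fin, hV₀cov⟩ :=
    isCompact_univ.elim_finite_subcover_image
      (fun s hs => hbasis.isOpen (hV ▸ hs : s ∈ V).1) hVcov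
  have hV₀D : V₀ ∈ D := by
    refine ⟨hV₀fin, fun s hs => (hV₀V hs).1, ?_⟩
    apply Set.eq_univ_of_univ_subset
    intro x hx
    have := hV₀cov hx
    simp only [mem_iUnion, id] at this
    obtain ⟨s, hs, hxs⟩ := this
    exact ⟨s, hs, hxs⟩
  have : V₀ ∈ Set.range e := he ▸ hV₀D
  obtain ⟨k, hk⟩ := this
  exact ⟨k, fun s hs => (hV₀V (hk ▸ hs)).2⟩

/-- Every second-countable compact `T1` space has a sequence of minimal finite open
covers, each consolidating the next, such that every open cover is refined by one
of them. -/
theorem stmt13 {X : Type*} [TopologicalSpace X] [SecondCountableTopology X]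
    [CompactSpace X] [T1Space X] :
    ∃ Ps : ℕ → Set (Set X),
      (∀ n, MinOpenCover (Ps n)) ∧
      (∀ n, ∀ p ∈ Ps n, p = ⋃₀ {q ∈ Ps (n + 1) | q ⊆ p}) ∧
      ∀ U : Set (Set X), (∀ u ∈ U, IsOpen u) → ⋃₀ U = Set.univ →
        ∃ n, ∀ p ∈ Ps n, ∃ u ∈ U, p ⊆ u := by
  classical
  obtain ⟨e, heo, hec, her⟩ := enumCovers (X := X)
  have key' : ∀ (A : Set (Set X)) (n : ℕ), ∃ B : Set (Set X),
      A.Finite → (∀ a ∈ A, IsOpen a) →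
      (MinOpenCover B ∧ (∀ b ∈ B, ∃ s ∈ e n, b ⊆ s) ∧ QQ A B) := by
    intro A n
    by_cases h : A.Finite ∧ ∀ a ∈ A, IsOpen a
    · obtain ⟨B, hB⟩ := keyLemma A h.1 h.2 (e n) (heo n) (hec n)
      exact ⟨B, fun _ _ => hB⟩
    · exact ⟨∅, fun h1 h2 => absurd ⟨h1, h2⟩ h⟩
  choose G hG using key'
  set Ps : ℕ → Set (Set X) :=
    fun n => Nat.rec (G ∅ 0) (fun k ih => G ih (k + 1)) n with hPs
  have hmain : ∀ n, MinOpenCover (Ps n) ∧ (∀ b ∈ Ps n, ∃ s ∈ e n, b ⊆ s) := by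
    intro n
    induction n with
    | zero =>
      have := hG ∅ 0 finite_empty (by simp)
      exact ⟨this.1, this.2.1⟩
    | succ k ihk =>
      have := hG (Ps k) (k + 1) ihk.1.1 ihk.1.2.1
      exact ⟨this.1, this.2.1⟩
  have hlink : ∀ n, QQ (Ps n) (Ps (n + 1)) := by
    intro n
    exact (hG (Ps n) (n + 1) (hmain n).1.1 (hmain n).1.2.1).2.2
  refine ⟨Ps, fun n => (hmain n).1, ?_, ?_⟩
  · intro n p hp
    apply Subset.antisymm
    · intro x hx
      obtain ⟨q, hq, hxq, hsub⟩ := hlink n x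
      exact ⟨q, ⟨hq, hsub p hp hx⟩, hxq⟩
    · exact sUnion_subset fun q hq => hq.2
  · intro U hUo hUc
    obtain ⟨k, hk⟩ := her U hUo hUc
    refine ⟨k, fun p hp => ?_⟩
    obtain ⟨s, hs, hps⟩ := (hmain k).2 p hp
    obtain ⟨u, hu, hsu⟩ := hk s hs
    exact ⟨u, hu, hps.trans hsu⟩
end

section
/- Let D be an ultrafilter on a set I and for each i ∈ I let v_i ⊆ X × M_i be co-valuations (co-bijective relations) on sets M_i in a fixed finite context X. Define the ultraproduct relation ∏_D v_i ⊆ X × ∏_D M_i by (x, [a_i]) ∈ ∏_D v_i iff {i : (x, a_i) ∈ v_i} ∈ D. Then ∏_D v_i is a co-valuation on the ultraproduct ∏_D M_i. -/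
/-- A co-valuation on `M` in context `X`, presented as `v : X → M → Prop`:
the sections cover `M` (co-surjectivity), and each `x` has a point in its section
lying in no other section (co-injectivity, i.e. surjectivity of `π_v`). -/
def CoValRel {X M : Type*} (v : X → M → Prop) : Prop :=
  (∀ a : M, ∃ x : X, v x a) ∧
    (∀ x : X, ∃ a : M, v x a ∧ ∀ x' : X, v x' a → x' = x)

/-- The setoid of `D`-a.e. equality on `∀ i, M i`. -/
def uSetoid {I : Type*} (D : Ultrafilter I) (M : I → Type*) : Setoid (∀ i, M i) where
  r a b := {i | a i = b i} ∈ D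
  iseqv := by
    refine ⟨fun a => ?_, fun {a b} h => ?_, fun {a b c} h1 h2 => ?_⟩
    · exact Filter.univ_mem' fun i => rfl
    · exact Filter.mem_of_superset h fun i hi => hi.symm
    · exact Filter.mem_of_superset (Filter.inter_mem h1 h2) fun i hi => hi.1.trans hi.2

/-- The ultraproduct `∏_D M_i`. -/
def UProd {I : Type*} (D : Ultrafilter I) (M : I → Type*) : Type _ :=
  Quotient (uSetoid D M)

/-- The ultraproduct relation `∏_D v_i ⊆ X × ∏_D M_i` :
`(x, [a]) ∈ ∏_D v_i` iff `(x, a i) ∈ v_i` for `D`-many `i`. -/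
def uRel {I X : Type*} {M : I → Type*} (D : Ultrafilter I)
    (v : ∀ i, X → M i → Prop) (x : X) (q : UProd D M) : Prop :=
  ∃ a : ∀ i, M i, Quotient.mk (uSetoid D M) a = q ∧ {i | v i x (a i)} ∈ D

/-- The ultraproduct of co-valuations in a fixed finite context is a co-valuation
on the ultraproduct. -/
theorem stmt14 {I X : Type*} [Fintype X] {M : I → Type*}
    (D : Ultrafilter I) (v : ∀ i, X → M i → Prop)
    (hv : ∀ i, CoValRel (v i)) :
    CoValRel (uRel D v) := by
  constructor
  · intro q
    refine Quotient.inductionOn q fun a => ?_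
    -- choose x i with v i (x i) (a i)
    choose x hx using fun i => (hv i).1 (a i)
    -- pushforward: some x0 has {i | x i = x0} ∈ D
    have hcover : (⋃ x0 ∈ (Finset.univ : Finset X), {i | x i = x0}) ∈ D := by
      refine Filter.univ_mem' fun i => ?_
      simp only [Set.mem_iUnion]
      exact ⟨x i, Finset.mem_univ _, rfl⟩
    obtain ⟨x0, -, hx0⟩ := (Ultrafilter.finite_biUnion_mem_iff
      (Finset.univ : Finset X).finite_toSet).mp hcover
    refine ⟨x0, a, rfl, Filter.mem_of_superset hx0 fun i hi => ?_⟩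
    have hxi : x i = x0 := hi
    exact hxi ▸ hx i
  · intro x
    choose a ha hu using fun i => (hv i).2 x
    refine ⟨Quotient.mk _ a, ⟨a, rfl, Filter.univ_mem' fun i => ha i⟩, ?_⟩
    rintro x' ⟨b, hb, hbD⟩
    have hab : {i | b i = a i} ∈ D := Quotient.exact hb
    obtain ⟨i, hi1, hi2⟩ := Filter.nonempty_of_mem (Filter.inter_mem hbD hab : _ ∈ (D : Filter I))
    exact hu i x' (hi2 ▸ hi1)
end

section
/- Let D be an ultrafilter on I, and for each i let v_i, w_i be co-valuations on M_i in contexts X and Y respectively. Then for any relation ≥ ⊆ X × Y: the ultraproduct ∏_D v_i consolidates ∏_D w_i with pattern ≥ (i.e., C_≥(∏_D w_i) = ∏_D v_i where C_≥(w) = ≥ ∘ w) if and only if {i ∈ I : C_≥(w_i) = v_i} ∈ D. -/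
lemma finite_exists_mem {I X : Type*} [Fintype X] (D : Ultrafilter I)
    {P : X → I → Prop} (h : {i | ∃ x, P x i} ∈ D) : ∃ x, {i | P x i} ∈ D := by
  by_contra hc
  push_neg at hc
  have h1 : ∀ x, {i | ¬ P x i} ∈ D := fun x =>
    (Ultrafilter.compl_mem_iff_notMem).2 (hc x)
  have h2 : (⋂ x, {i | ¬ P x i}) ∈ D := (Filter.iInter_mem).2 h1
  obtain ⟨i, hi1, hi2⟩ := Filter.nonempty_of_mem (Filter.inter_mem h h2)
  obtain ⟨x, hx⟩ := hi1
  exact (Set.mem_iInter.1 hi2 x) hx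

lemma uRel_mk {I X : Type*} {M : I → Type*} (D : Ultrafilter I)
    (v : ∀ i, X → M i → Prop) (x : X) (a : ∀ i, M i) :
    uRel D v x (Quotient.mk (uSetoid D M) a) ↔ {i | v i x (a i)} ∈ D := by
  constructor
  · rintro ⟨a', ha', hmem⟩
    have heq : {i | a' i = a i} ∈ D := Quotient.exact ha'
    refine Filter.mem_of_superset (Filter.inter_mem hmem heq) fun i hi => ?_
    simp only [Set.mem_setOf_eq] at *
    exact hi.2 ▸ hi.1
  · exact fun h => ⟨a, rfl, h⟩

/-- `∏_D v_i` consolidates `∏_D w_i` with pattern `≥` iff `v_i` consolidates `w_i`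
with pattern `≥` for `D`-many `i`. -/
theorem stmt15 {I X Y : Type*} [Fintype X] [Fintype Y] {M : I → Type*}
    (D : Ultrafilter I)
    (v : ∀ i, X → M i → Prop) (w : ∀ i, Y → M i → Prop)
    (hv : ∀ i, CoValRel (v i)) (hw : ∀ i, CoValRel (w i))
    (ge : X → Y → Prop) :
    (∀ (x : X) (q : UProd D M),
        uRel D v x q ↔ ∃ y : Y, ge x y ∧ uRel D w y q) ↔
      {i | ∀ (x : X) (a : M i), v i x a ↔ ∃ y : Y, ge x y ∧ w i y a} ∈ D := by
  classical
  constructor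
  · intro H
    by_contra hnot
    rw [← Ultrafilter.compl_mem_iff_notMem] at hnot
    have hnot' : {i | ∃ x, ∃ a : M i,
        (v i x a ∧ ∀ y, ge x y → ¬ w i y a) ∨
        (¬ v i x a ∧ ∃ y, ge x y ∧ w i y a)} ∈ D := by
      refine Filter.mem_of_superset hnot fun i hi => ?_
      simp only [Set.mem_compl_iff, Set.mem_setOf_eq, not_forall] at hi
      obtain ⟨x, a, hxa⟩ := hi
      refine ⟨x, a, ?_⟩
      by_cases hva : v i x a
      · exact Or.inl ⟨hva, fun y hy hwy => hxa ⟨fun _ => ⟨y, hy, hwy⟩, fun _ => hva⟩⟩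
      · refine Or.inr ⟨hva, ?_⟩
        by_contra hE
        exact hxa ⟨fun h => absurd h hva, fun h => absurd h hE⟩
    obtain ⟨x, hx⟩ := finite_exists_mem D hnot'
    have hsplit := (Ultrafilter.union_mem_iff (f := D)
      (s := {i | ∃ a : M i, v i x a ∧ ∀ y, ge x y → ¬ w i y a})
      (t := {i | ∃ a : M i, ¬ v i x a ∧ ∃ y, ge x y ∧ w i y a})).1
      (Filter.mem_of_superset hx fun i hi => by
        obtain ⟨a, h | h⟩ := hi
        · exact Or.inl ⟨a, h⟩
        · exact Or.inr ⟨a, h⟩)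
    have hne : ∀ i, Nonempty (M i) := fun i => ⟨((hv i).2 x).choose⟩
    rcases hsplit with hT | hT
    · have key : ∀ i, ∃ a : M i,
          (∃ a' : M i, v i x a' ∧ ∀ y, ge x y → ¬ w i y a') →
            (v i x a ∧ ∀ y, ge x y → ¬ w i y a) := fun i => by
        by_cases h : ∃ a' : M i, v i x a' ∧ ∀ y, ge x y → ¬ w i y a'
        · exact ⟨h.choose, fun _ => h.choose_spec⟩
        · exact ⟨Classical.arbitrary (M i), fun h' => absurd h' h⟩
      choose a ha using key
      have hva : {i | v i x (a i)} ∈ D :=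
        Filter.mem_of_superset hT fun i hi => (ha i hi).1
      obtain ⟨y, hgy, hwy⟩ := (H x _).1 ((uRel_mk D v x a).2 hva)
      have hwy' := (uRel_mk D w y a).1 hwy
      obtain ⟨i, hi1, hi2⟩ := Filter.nonempty_of_mem (Filter.inter_mem hT hwy')
      exact (ha i hi1).2 y hgy hi2
    · have key : ∀ i, ∃ a : M i,
          (∃ a' : M i, ¬ v i x a' ∧ ∃ y, ge x y ∧ w i y a') →
            (¬ v i x a ∧ ∃ y, ge x y ∧ w i y a) := fun i => by
        by_cases h : ∃ a' : M i, ¬ v i x a' ∧ ∃ y, ge x y ∧ w i y a'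
        · exact ⟨h.choose, fun _ => h.choose_spec⟩
        · exact ⟨Classical.arbitrary (M i), fun h' => absurd h' h⟩
      choose a ha using key
      have hwa : {i | ∃ y, ge x y ∧ w i y (a i)} ∈ D :=
        Filter.mem_of_superset hT fun i hi => (ha i hi).2
      obtain ⟨y, hy⟩ := finite_exists_mem D (P := fun y i => ge x y ∧ w i y (a i)) hwa
      obtain ⟨j, hj⟩ := Filter.nonempty_of_mem hy
      have hwy : {i | w i y (a i)} ∈ D := Filter.mem_of_superset hy fun i hi => hi.2
      have hvx := (uRel_mk D v x a).1 ((H x _).2 ⟨y, hj.1, (uRel_mk D w y a).2 hwy⟩)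
      obtain ⟨i, hi1, hi2⟩ := Filter.nonempty_of_mem (Filter.inter_mem hT hvx)
      exact (ha i hi1).1 hi2
  · intro hD x q
    induction q using Quotient.inductionOn with
    | h a =>
      rw [uRel_mk]
      constructor
      · intro hva
        have hE : {i | ∃ y, ge x y ∧ w i y (a i)} ∈ D :=
          Filter.mem_of_superset (Filter.inter_mem hD hva)
            fun i hi => (hi.1 x (a i)).1 hi.2
        obtain ⟨y, hy⟩ := finite_exists_mem D
          (P := fun y i => ge x y ∧ w i y (a i)) hE
        obtain ⟨j, hj⟩ := Filter.nonempty_of_mem hy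
        exact ⟨y, hj.1, (uRel_mk D w y a).2
          (Filter.mem_of_superset hy fun i hi => hi.2)⟩
      · rintro ⟨y, hgy, hwy⟩
        have hwy' := (uRel_mk D w y a).1 hwy
        exact Filter.mem_of_superset (Filter.inter_mem hD hwy')
          fun i hi => (hi.1 x (a i)).2 ⟨y, hgy, hi.2⟩
end

section
/- Let V be a family of minimal finite covers of a set M that is directed under fragmentation (for any u, v ∈ V there is w ∈ V fragmenting both). Then V has the following amalgamation property: if v₀, v₁ ∈ V and patterns ≥₀, ≥₁ satisfy C_{≥₀}(v₀) = C_{≥₁}(v₁), then for every w ∈ V fragmenting both v₀ and v₁ with patterns ⪰₀, ⪰₁ respectively (meaning vⱼ = C_{⪰ⱼ}(w)), the compositions agree: ≥₀ ∘ ⪰₀ = ≥₁ ∘ ⪰₁. -/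
/-- Amalgamation for co-valuations: if `C_{≥₀}(v₀) = C_{≥₁}(v₁)` and `w` fragments
both `v₀` and `v₁` with patterns `⪰₀`, `⪰₁`, then `≥₀ ∘ ⪰₀ = ≥₁ ∘ ⪰₁`. -/
theorem stmt16 {M X0 X1 W Z : Type*}
    [Fintype X0] [Fintype X1] [Fintype W] [Fintype Z]
    (v0 : X0 → M → Prop) (v1 : X1 → M → Prop) (w : W → M → Prop)
    (hv0 : CoValRel v0) (hv1 : CoValRel v1) (hw : CoValRel w)
    (ge0 : Z → X0 → Prop) (ge1 : Z → X1 → Prop)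
    (hge0 : CoValRel ge0) (hge1 : CoValRel ge1)
    (hcons : ∀ (z : Z) (a : M),
      (∃ x, ge0 z x ∧ v0 x a) ↔ (∃ x, ge1 z x ∧ v1 x a))
    (p0 : X0 → W → Prop) (p1 : X1 → W → Prop)
    (hp0 : CoValRel p0) (hp1 : CoValRel p1)
    (hf0 : ∀ (x : X0) (a : M), v0 x a ↔ ∃ y, p0 x y ∧ w y a)
    (hf1 : ∀ (x : X1) (a : M), v1 x a ↔ ∃ y, p1 x y ∧ w y a) :
    ∀ (z : Z) (y : W),
      (∃ x, ge0 z x ∧ p0 x y) ↔ (∃ x, ge1 z x ∧ p1 x y) := by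
  intro z y
  obtain ⟨a, hay, huniq⟩ := hw.2 y
  have h0 : ∀ x : X0, v0 x a ↔ p0 x y := by
    intro x
    rw [hf0]
    constructor
    · rintro ⟨y', hp, hwa⟩
      rwa [huniq y' hwa] at hp
    · exact fun h => ⟨y, h, hay⟩
  have h1 : ∀ x : X1, v1 x a ↔ p1 x y := by
    intro x
    rw [hf1]
    constructor
    · rintro ⟨y', hp, hwa⟩
      rwa [huniq y' hwa] at hp
    · exact fun h => ⟨y, h, hay⟩
  have := hcons z a
  simp only [h0, h1] at this
  exact this
end

section
/- Let (M, V) be a structure in the logic of co-valuations and suppose w ∈ V, in context Z, fragments both u ∈ V in context X and v ∈ V in context Y. Then there is a context Z₀ with |Z₀| ≤ 2^{|X|} · 2^{|Y|} and a co-bijective relation ≥ ⊆ Z₀ × Z such that the consolidation C_≥(w) is in V and still fragments both u and v. -/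
/-- If a co-valuation `w` in context `Z` fragments `u` (context `X`) and `v`
(context `Y`), then there is a context `Z₀` with `|Z₀| ≤ 2^|X| · 2^|Y|` and a
co-bijective pattern `≥ ⊆ Z₀ × Z` such that the consolidation `C_≥(w)` is a
co-valuation still fragmenting both `u` and `v`. -/
theorem stmt17 {M X Y Z : Type*} [Fintype X] [Fintype Y] [Fintype Z]
    (u : X → M → Prop) (v : Y → M → Prop) (w : Z → M → Prop)
    (hu : CoValRel u) (hv : CoValRel v) (hw : CoValRel w)
    (gu : X → Z → Prop) (gv : Y → Z → Prop)
    (hfu : ∀ (x : X) (a : M), u x a ↔ ∃ z, gu x z ∧ w z a)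
    (hfv : ∀ (y : Y) (a : M), v y a ↔ ∃ z, gv y z ∧ w z a) :
    ∃ (Z0 : Type) (i : Fintype Z0) (ge : Z0 → Z → Prop),
      @Fintype.card Z0 i ≤ 2 ^ Fintype.card X * 2 ^ Fintype.card Y ∧
      CoValRel ge ∧
      CoValRel (fun (z0 : Z0) (a : M) => ∃ z, ge z0 z ∧ w z a) ∧
      (∃ g : X → Z0 → Prop,
        ∀ (x : X) (a : M), u x a ↔ ∃ z0, g x z0 ∧ ∃ z, ge z0 z ∧ w z a) ∧
      (∃ g : Y → Z0 → Prop,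
        ∀ (y : Y) (a : M), v y a ↔ ∃ z0, g y z0 ∧ ∃ z, ge z0 z ∧ w z a) := by
  classical
  set nX := Fintype.card X with hnX
  set nY := Fintype.card Y with hnY
  let eX : X ≃ Fin nX := Fintype.equivFin X
  let eY : Y ≃ Fin nY := Fintype.equivFin Y
  -- the "type" of a point z : which sections of u and of v contain [z]_w
  let t : Z → Set (Fin nX) × Set (Fin nY) := fun z =>
    ({i | gu (eX.symm i) z}, {j | gv (eY.symm j) z})
  have ht_gu : ∀ z z', t z = t z' → ∀ x, gu x z ↔ gu x z' := by
    intro z z' h x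
    have h1 : (t z).1 = (t z').1 := by rw [h]
    have h2 : eX x ∈ (t z).1 ↔ eX x ∈ (t z').1 := by rw [h1]
    simpa [t, eX.symm_apply_apply] using h2
  have ht_gv : ∀ z z', t z = t z' → ∀ y, gv y z ↔ gv y z' := by
    intro z z' h y
    have h1 : (t z).2 = (t z').2 := by rw [h]
    have h2 : eY y ∈ (t z).2 ↔ eY y ∈ (t z').2 := by rw [h1]
    simpa [t, eY.symm_apply_apply] using h2
  -- Z0 : the image of t
  let Z0 : Type := {p : Set (Fin nX) × Set (Fin nY) // ∃ z : Z, t z = p}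
  let ge : Z0 → Z → Prop := fun z0 z => t z = z0.val
  have iZ0 : Fintype Z0 := Fintype.ofFinite _
  have hcard : @Fintype.card Z0 iZ0 ≤ 2 ^ nX * 2 ^ nY := by
    calc @Fintype.card Z0 iZ0
        ≤ Fintype.card (Set (Fin nX) × Set (Fin nY)) :=
          @Fintype.card_le_of_injective _ _ iZ0 _ _ Subtype.val_injective
      _ = 2 ^ nX * 2 ^ nY := by
          simp [Fintype.card_prod, Fintype.card_set]
  have hge : CoValRel ge := by
    constructor
    · intro z; exact ⟨⟨t z, z, rfl⟩, rfl⟩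
    · rintro ⟨p, z, hz⟩
      exact ⟨z, hz, fun z0' h => Subtype.ext (by rw [← h, hz])⟩
  have hcons : CoValRel (fun (z0 : Z0) (a : M) => ∃ z, ge z0 z ∧ w z a) := by
    constructor
    · intro a
      obtain ⟨z, hz⟩ := hw.1 a
      exact ⟨⟨t z, z, rfl⟩, z, rfl, hz⟩
    · rintro ⟨p, z, hz⟩
      obtain ⟨a, haw, hauniq⟩ := hw.2 z
      refine ⟨a, ⟨z, hz, haw⟩, ?_⟩
      rintro ⟨p', z'', hz''⟩ ⟨z', hz', haz'⟩
      have hzz : z' = z := hauniq z' haz'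
      subst hzz
      exact Subtype.ext (by rw [← hz', hz])
  have hgX : ∃ g : X → Z0 → Prop,
      ∀ (x : X) (a : M), u x a ↔ ∃ z0, g x z0 ∧ ∃ z, ge z0 z ∧ w z a := by
    refine ⟨fun x z0 => ∃ z, t z = z0.val ∧ gu x z, fun x a => ?_⟩
    rw [hfu x a]
    constructor
    · rintro ⟨z, hgu, hwz⟩
      exact ⟨⟨t z, z, rfl⟩, ⟨z, rfl, hgu⟩, z, rfl, hwz⟩
    · rintro ⟨z0, ⟨z1, hz1, hgu1⟩, z, hz, hwz⟩
      exact ⟨z, (ht_gu z1 z (by rw [hz1, hz]) x).mp hgu1, hwz⟩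
  have hgY : ∃ g : Y → Z0 → Prop,
      ∀ (y : Y) (a : M), v y a ↔ ∃ z0, g y z0 ∧ ∃ z, ge z0 z ∧ w z a := by
    refine ⟨fun y z0 => ∃ z, t z = z0.val ∧ gv y z, fun y a => ?_⟩
    rw [hfv y a]
    constructor
    · rintro ⟨z, hgv, hwz⟩
      exact ⟨⟨t z, z, rfl⟩, ⟨z, rfl, hgv⟩, z, rfl, hwz⟩
    · rintro ⟨z0, ⟨z1, hz1, hgv1⟩, z, hz, hwz⟩
      exact ⟨z, (ht_gv z1 z (by rw [hz1, hz]) y).mp hgv1, hwz⟩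
  exact ⟨Z0, iZ0, ge, hcard, hge, hcons, hgX, hgY⟩
end

section
/- Let A, B be finite open covers of a compact T1 space X, and for each x ∈ X let d_x = {c ∈ A ∪ B : x ∈ c}. For each d ∈ D = {d_x : x ∈ X} pick a point x_d with d_{x_d} = d and set f_d = {x_e : e ∈ D \ {d}}. Then C = {(⋂ d) \ f_d : d ∈ D} is an open cover of X refining both A and B, and moreover C fragments both A and B, i.e. every a ∈ A is the union of the elements of C contained in a, and likewise for every b ∈ B. -/
/-- The explicit common fragmentation: for finite open covers `A`, `B` of a compact
`T1` space, with `d x = {c ∈ A ∪ B : x ∈ c}`, `D = {d x : x ∈ X}`, a choice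
`pick e` of a point with `d (pick e) = e` for each `e ∈ D`, and
`C = {(⋂₀ e) \ {pick e' : e' ∈ D, e' ≠ e} : e ∈ D}`, the family `C` is an open
cover of `X` refining and fragmenting both `A` and `B`. -/
theorem stmt18 {X : Type*} [TopologicalSpace X] [CompactSpace X] [T1Space X]
    (A B : Set (Set X)) (hAf : A.Finite) (hBf : B.Finite)
    (hAo : ∀ a ∈ A, IsOpen a) (hBo : ∀ b ∈ B, IsOpen b)
    (hAc : ⋃₀ A = Set.univ) (hBc : ⋃₀ B = Set.univ)
    (d : X → Set (Set X)) (hd : ∀ x : X, d x = {c | c ∈ A ∪ B ∧ x ∈ c})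
    (D : Set (Set (Set X))) (hD : D = Set.range d)
    (pick : Set (Set X) → X) (hpick : ∀ e ∈ D, d (pick e) = e)
    (C : Set (Set X))
    (hC : C = (fun e => (Set.sInter e) \ (pick '' (D \ {e}))) '' D) :
    (∀ c ∈ C, IsOpen c) ∧
    ⋃₀ C = Set.univ ∧
    (∀ c ∈ C, ∃ a ∈ A, c ⊆ a) ∧
    (∀ c ∈ C, ∃ b ∈ B, c ⊆ b) ∧
    (∀ a ∈ A, a = ⋃₀ {c ∈ C | c ⊆ a}) ∧
    (∀ b ∈ B, b = ⋃₀ {c ∈ C | c ⊆ b}) := by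
  have hsub : ∀ e ∈ D, e ⊆ A ∪ B := by
    intro e he
    rw [hD] at he
    obtain ⟨x, rfl⟩ := he
    intro c hc
    rw [hd] at hc
    exact hc.1
  have hDfin : D.Finite :=
    Set.Finite.subset (hAf.union hBf).finite_subsets hsub
  have hxmem : ∀ x : X, x ∈ (⋂₀ (d x)) \ (pick '' (D \ {d x})) := by
    intro x
    constructor
    · intro c hc; rw [hd] at hc; exact hc.2
    · rintro ⟨e', ⟨he'D, hne⟩, hpe⟩
      subst hpe
      exact hne (by rw [hpick e' he'D]; rfl)
  have hdD : ∀ x : X, d x ∈ D := fun x => hD ▸ ⟨x, rfl⟩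
  refine ⟨?_, ?_, ?_, ?_, ?_, ?_⟩
  · rintro c hc
    rw [hC] at hc
    obtain ⟨e, heD, rfl⟩ := hc
    have h1 : IsOpen (⋂₀ e) := by
      apply Set.Finite.isOpen_sInter (Set.Finite.subset (hAf.union hBf) (hsub e heD))
      intro c hc
      rcases hsub e heD hc with h | h
      · exact hAo c h
      · exact hBo c h
    have h2 : IsClosed (pick '' (D \ {e})) :=
      ((hDfin.subset Set.diff_subset).image pick).isClosed
    exact h1.sdiff h2
  · exact Set.eq_univ_of_forall fun x => ⟨_, hC ▸ ⟨d x, hdD x, rfl⟩, hxmem x⟩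
  · rintro c hc
    rw [hC] at hc
    obtain ⟨e, heD, rfl⟩ := hc
    have : ∃ a ∈ A, pick e ∈ a := by
      have := Set.eq_univ_iff_forall.mp hAc (pick e)
      simpa using this
    obtain ⟨a, haA, hpa⟩ := this
    refine ⟨a, haA, fun y hy => hy.1 a ?_⟩
    rw [← hpick e heD, hd]
    exact ⟨Or.inl haA, hpa⟩
  · rintro c hc
    rw [hC] at hc
    obtain ⟨e, heD, rfl⟩ := hc
    have : ∃ b ∈ B, pick e ∈ b := by
      have := Set.eq_univ_iff_forall.mp hBc (pick e)
      simpa using this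
    obtain ⟨b, hbB, hpb⟩ := this
    refine ⟨b, hbB, fun y hy => hy.1 b ?_⟩
    rw [← hpick e heD, hd]
    exact ⟨Or.inr hbB, hpb⟩
  · intro a haA
    apply Set.Subset.antisymm
    · intro x hx
      refine ⟨_, ⟨hC ▸ ⟨d x, hdD x, rfl⟩, fun y hy => hy.1 a ?_⟩, hxmem x⟩
      rw [hd]; exact ⟨Or.inl haA, hx⟩
    · rintro x ⟨c, ⟨_, hca⟩, hxc⟩
      exact hca hxc
  · intro b hbB
    apply Set.Subset.antisymm
    · intro x hx
      refine ⟨_, ⟨hC ▸ ⟨d x, hdD x, rfl⟩, fun y hy => hy.1 b ?_⟩, hxmem x⟩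
      rw [hd]; exact ⟨Or.inr hbB, hx⟩
    · rintro x ⟨c, ⟨_, hcb⟩, hxc⟩
      exact hcb hxc
end

section
/- Let ℙ be an ω-poset whose spectrum Sp ℙ (the space of minimal selectors with topology generated by the sets p^∈) is given. Then Sp ℙ is a T1 space: for any two distinct minimal selectors S and T there exist s ∈ S \ T and t ∈ T \ S, so the basic open sets s^∈ and t^∈ separate S from T and T from S respectively. -/
/-- The spectrum of an ω-poset is `T1`: distinct minimal selectors are mutually
non-included, and the resulting topology is `T1`. -/
theorem stmt19 {P : Type*} [PartialOrder P] (h : IsOmegaPoset P) :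
    (∀ S T : Spec P, S ≠ T →
        (∃ s ∈ S.1, s ∉ T.1) ∧ (∃ t ∈ T.1, t ∉ S.1)) ∧
      @T1Space (Spec P)
        (TopologicalSpace.generateFrom (Set.range (pin (P := P)))) := by
  have key : ∀ S T : Spec P, S ≠ T → ∃ s ∈ S.1, s ∉ T.1 := by
    intro S T hST
    by_contra hc
    push_neg at hc
    have hsub : S.1 ⊆ T.1 := fun s hs => hc s hs
    have := T.2.2 S.1 hsub S.2.1
    exact hST (Subtype.ext this)
  refine ⟨fun S T hST => ⟨key S T hST, key T S hST.symm⟩, ?_⟩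
  letI : TopologicalSpace (Spec P) :=
    TopologicalSpace.generateFrom (Set.range (pin (P := P)))
  rw [t1Space_iff_exists_open]
  intro S T hST
  obtain ⟨s, hsS, hsT⟩ := key S T hST
  exact ⟨pin s, TopologicalSpace.isOpen_generateFrom_of_mem ⟨s, rfl⟩, hsS, hsT⟩
end
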